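/- arXiv:2604.13831 — 9 statements merged into one kernel-verified Lean document; each statement's English description precedes it below -/
import Mathlib

section
/- For any two times t₁ < t₂, the schedule cost gap function δ_{t₁,t₂}(n) = σ_n(t₁) − σ_n(t₂) is strictly increasing in n. -/
/-- For t₁ < t₂, the schedule cost gap δ_{t₁,t₂}(n) = σ_n(t₁) − σ_n(t₂)
is strictly increasing in n. -/
theorem gap_strictMono
    (N : ℝ) (β γ : ℝ → ℝ)
    (hβmono : StrictMonoOn β (Set.Icc 0 N))
    (hβmem : ∀ n ∈ Set.Icc (0:ℝ) N, β n ∈ Set.Ioo (0:ℝ) 1)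
    (hγanti : StrictAntiOn γ (Set.Icc 0 N))
    (hγpos : ∀ n ∈ Set.Icc (0:ℝ) N, 0 < γ n)
    (t₁ t₂ : ℝ) (ht : t₁ < t₂) :
    StrictMonoOn (fun m => (β m * max (-t₁) 0 + γ m * max t₁ 0)
      - (β m * max (-t₂) 0 + γ m * max t₂ 0)) (Set.Icc 0 N) := by
  intro m hm n hn hmn
  have hβ := hβmono hm hn hmn
  have hγ := hγanti hm hn hmn
  have ha : max (-t₂) 0 ≤ max (-t₁) 0 := max_le_max (by linarith) le_rfl
  have hb : max t₁ 0 ≤ max t₂ 0 := max_le_max ht.le le_rfl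
  have hkey : max (-t₂) 0 < max (-t₁) 0 ∨ max t₁ 0 < max t₂ 0 := by
    rcases lt_or_ge t₁ 0 with h1 | h1
    · left
      rcases lt_or_ge t₂ 0 with h2 | h2
      · rw [max_eq_left (by linarith), max_eq_left (by linarith)]; linarith
      · rw [max_eq_right (by linarith), max_eq_left (by linarith)]; linarith
    · right
      rw [max_eq_left h1, max_eq_left (by linarith)]; linarith
  simp only
  rcases hkey with h | h
  · nlinarith
  · nlinarith
end

section
/- Suppose Q : ℝ → ℝ and n : [τₛ, τₑ] → [0,N] is a bijection such that for each time t, the traveler n(t) arriving at t minimizes their generalized cost C_{n(t)} over arrival times in [τₛ, τₑ]. Then n is strictly increasing: for t₁ < t₂, n(t₁) < n(t₂). -/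
/-- At equilibrium, the assignment n(t) of travelers to arrival times
is strictly increasing. -/
theorem arrival_order_strictMono
    (N τs τe : ℝ) (hτs : τs < 0) (hτe : 0 < τe)
    (β γ Q nf : ℝ → ℝ)
    (hβmono : StrictMonoOn β (Set.Icc 0 N))
    (hβmem : ∀ n ∈ Set.Icc (0:ℝ) N, β n ∈ Set.Ioo (0:ℝ) 1)
    (hγanti : StrictAntiOn γ (Set.Icc 0 N))
    (hγpos : ∀ n ∈ Set.Icc (0:ℝ) N, 0 < γ n)
    (hbij : Set.BijOn nf (Set.Icc τs τe) (Set.Icc 0 N))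
    (heq : ∀ t ∈ Set.Icc τs τe, ∀ u ∈ Set.Icc τs τe,
      Q t + β (nf t) * max (-t) 0 + γ (nf t) * max t 0 ≤
      Q u + β (nf t) * max (-u) 0 + γ (nf t) * max u 0) :
    StrictMonoOn nf (Set.Icc τs τe) := by
  intro t₁ ht₁ t₂ ht₂ hlt
  have hn₁ := hbij.mapsTo ht₁
  have hn₂ := hbij.mapsTo ht₂
  have hne : nf t₁ ≠ nf t₂ := fun h => absurd (hbij.injOn ht₁ ht₂ h) (ne_of_lt hlt)
  by_contra hcon
  have h21 : nf t₂ < nf t₁ := lt_of_le_of_ne (not_lt.mp hcon) (Ne.symm hne)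
  have hβ : β (nf t₂) < β (nf t₁) := hβmono hn₂ hn₁ h21
  have hγ : γ (nf t₁) < γ (nf t₂) := hγanti hn₂ hn₁ h21
  have h1 := heq t₁ ht₁ t₂ ht₂
  have h2 := heq t₂ ht₂ t₁ ht₁
  have ha : max (-t₂) 0 ≤ max (-t₁) 0 := max_le_max (by linarith) le_rfl
  have hb : max t₁ 0 ≤ max t₂ 0 := max_le_max (le_of_lt hlt) le_rfl
  have e₁ : max t₁ 0 - max (-t₁) 0 = t₁ := max_zero_sub_eq_self t₁
  have e₂ : max t₂ 0 - max (-t₂) 0 = t₂ := max_zero_sub_eq_self t₂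
  have hsum : (β (nf t₁) - β (nf t₂)) * (max (-t₁) 0 - max (-t₂) 0) +
      (γ (nf t₂) - γ (nf t₁)) * (max t₂ 0 - max t₁ 0) ≤ 0 := by nlinarith [h1, h2]
  rcases lt_or_ge 0 (max (-t₁) 0 - max (-t₂) 0) with h | h
  · nlinarith [mul_pos (sub_pos.mpr hβ) h,
      mul_nonneg (le_of_lt (sub_pos.mpr hγ)) (sub_nonneg.mpr hb)]
  · have hb' : 0 < max t₂ 0 - max t₁ 0 := by linarith
    nlinarith [mul_pos (sub_pos.mpr hγ) hb',
      mul_nonneg (le_of_lt (sub_pos.mpr hβ)) (sub_nonneg.mpr ha)]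
end

section
/- Define Q(t) = ∫_{τₛ}^{t} β(n(u)) du for t ∈ [τₛ, 0] and Q(t) = Q(0) − ∫₀^{t} γ(n(u)) du for t ∈ (0, τₑ], where n(t) = N₁ + t·s with N₁ = −s·τₛ, τₑ = τₛ + N/s, and N₁ chosen with ∫₀^{N₁} β = ∫_{N₁}^{N} γ. Then for every traveler m ∈ [0,N], the cost C_m(u) = Q(u) + β(m)·max(−u,0) + γ(m)·max(u,0) attains its minimum over u ∈ [τₛ, τₑ] at u = t(m) = (m − N₁)/s. -/
open MeasureTheory intervalIntegral

set_option maxHeartbeats 1000000 in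
/-- The constructed queueing profile Q and the ordered arrival
assignment t(m) = (m − N₁)/s form an equilibrium: every traveler's cost is
minimized at their assigned arrival time. -/
theorem equilibrium_existence
    (N s N₁ : ℝ) (hN : 0 < N) (hs : 0 < s) (hN₁ : N₁ ∈ Set.Ioo (0:ℝ) N)
    (β γ : ℝ → ℝ)
    (hβc : ContinuousOn β (Set.Icc 0 N))
    (hβmono : StrictMonoOn β (Set.Icc 0 N))
    (hβmem : ∀ n ∈ Set.Icc (0:ℝ) N, β n ∈ Set.Ioo (0:ℝ) 1)
    (hγc : ContinuousOn γ (Set.Icc 0 N))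
    (hγanti : StrictAntiOn γ (Set.Icc 0 N))
    (hγpos : ∀ n ∈ Set.Icc (0:ℝ) N, 0 < γ n)
    (hbal : (∫ n in (0:ℝ)..N₁, β n) = ∫ n in N₁..N, γ n)
    (Q : ℝ → ℝ)
    (hQ1 : ∀ t ∈ Set.Icc (-N₁ / s) 0, Q t = ∫ u in (-N₁ / s)..t, β (N₁ + u * s))
    (hQ2 : ∀ t ∈ Set.Ioc (0:ℝ) ((N - N₁) / s),
      Q t = Q 0 - ∫ u in (0:ℝ)..t, γ (N₁ + u * s)) :
    ∀ m ∈ Set.Icc (0:ℝ) N, ∀ u ∈ Set.Icc (-N₁ / s) ((N - N₁) / s),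
      Q ((m - N₁) / s) + β m * max (-((m - N₁) / s)) 0 + γ m * max ((m - N₁) / s) 0 ≤
      Q u + β m * max (-u) 0 + γ m * max u 0 := by
  intro m hm u hu
  obtain ⟨hN₁0, hN₁N⟩ := hN₁
  obtain ⟨hm0, hmN⟩ := hm
  obtain ⟨hu1, hu2⟩ := hu
  set τs : ℝ := -N₁ / s with hτs
  set τe : ℝ := (N - N₁) / s with hτe
  set tm : ℝ := (m - N₁) / s with htm
  have hsne : s ≠ 0 := ne_of_gt hs
  have hτss : τs * s = -N₁ := by rw [hτs]; field_simp
  have hτes : τe * s = N - N₁ := by rw [hτe]; field_simp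
  have htms : tm * s = m - N₁ := by rw [htm]; field_simp
  have hmul : ∀ {v w : ℝ}, v ≤ w → v * s ≤ w * s :=
    fun h => mul_le_mul_of_nonneg_right h hs.le
  have hτs0 : τs ≤ 0 := by
    rw [hτs]; apply div_nonpos_of_nonpos_of_nonneg <;> linarith
  have hτe0 : 0 ≤ τe := by
    rw [hτe]; apply div_nonneg (by linarith) hs.le
  have hτstm : τs ≤ tm := by
    rw [hτs, htm]; apply div_le_div_of_nonneg_right ?_ hs.le <;> linarith
  have htmτe : tm ≤ τe := by
    rw [htm, hτe]; apply div_le_div_of_nonneg_right ?_ hs.le <;> linarith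
  -- membership of n(v) = N₁ + v*s
  have hmemL : ∀ v, τs ≤ v → v ≤ 0 → N₁ + v * s ∈ Set.Icc (0:ℝ) N := by
    intro v h1 h2
    constructor <;> nlinarith [hmul h1, hmul h2, hτss]
  have hmemR : ∀ v, 0 ≤ v → v ≤ τe → N₁ + v * s ∈ Set.Icc (0:ℝ) N := by
    intro v h1 h2
    constructor <;> nlinarith [hmul h1, hmul h2, hτes]
  have hmm : m ∈ Set.Icc (0:ℝ) N := ⟨hm0, hmN⟩
  -- integrability
  have hncont : Continuous (fun v : ℝ => N₁ + v * s) := by continuity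
  have hβint : ∀ a b, τs ≤ a → a ≤ 0 → τs ≤ b → b ≤ 0 →
      IntervalIntegrable (fun v => β (N₁ + v * s)) volume a b := by
    intro a b ha1 ha2 hb1 hb2
    apply ContinuousOn.intervalIntegrable
    apply hβc.comp hncont.continuousOn
    intro v hv
    rw [Set.uIcc_eq_union] at hv
    rcases hv with hv | hv
    · exact hmemL v (le_trans ha1 hv.1) (le_trans hv.2 hb2)
    · exact hmemL v (le_trans hb1 hv.1) (le_trans hv.2 ha2)
  have hγint : ∀ a b, 0 ≤ a → a ≤ τe → 0 ≤ b → b ≤ τe →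
      IntervalIntegrable (fun v => γ (N₁ + v * s)) volume a b := by
    intro a b ha1 ha2 hb1 hb2
    apply ContinuousOn.intervalIntegrable
    apply hγc.comp hncont.continuousOn
    intro v hv
    rw [Set.uIcc_eq_union] at hv
    rcases hv with hv | hv
    · exact hmemR v (le_trans ha1 hv.1) (le_trans hv.2 hb2)
    · exact hmemR v (le_trans hb1 hv.1) (le_trans hv.2 ha2)
  -- Q differences
  have hQleft : ∀ a b, τs ≤ a → a ≤ b → b ≤ 0 →
      Q b - Q a = ∫ v in a..b, β (N₁ + v * s) := by
    intro a b ha hab hb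
    rw [hQ1 a ⟨ha, hab.trans hb⟩, hQ1 b ⟨ha.trans hab, hb⟩,
      ← intervalIntegral.integral_add_adjacent_intervals
        (hβint τs a le_rfl hτs0 ha (hab.trans hb))
        (hβint a b ha (hab.trans hb) (ha.trans hab) hb)]
    ring
  have hQ2' : ∀ t, 0 ≤ t → t ≤ τe →
      Q t = Q 0 - ∫ v in (0:ℝ)..t, γ (N₁ + v * s) := by
    intro t ht hte
    rcases eq_or_lt_of_le ht with h | h
    · simp [← h]
    · exact hQ2 t ⟨h, hte⟩
  have hQright : ∀ a b, 0 ≤ a → a ≤ b → b ≤ τe →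
      Q b - Q a = -∫ v in a..b, γ (N₁ + v * s) := by
    intro a b ha hab hb
    have hadj := intervalIntegral.integral_add_adjacent_intervals
      (hγint 0 a le_rfl hτe0 ha (hab.trans hb))
      (hγint a b ha (hab.trans hb) (ha.trans hab) hb)
    rw [hQ2' a ha (hab.trans hb), hQ2' b (ha.trans hab) hb]
    linear_combination hadj
  -- the cost function
  set C : ℝ → ℝ := fun w => Q w + β m * max (-w) 0 + γ m * max w 0 with hC
  have hCneg : ∀ w, w ≤ 0 → C w = Q w - β m * w := by
    intro w hw
    simp only [hC]
    rw [max_eq_left (by linarith : (0:ℝ) ≤ -w), max_eq_right hw]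
    ring
  have hCpos : ∀ w, 0 ≤ w → C w = Q w + γ m * w := by
    intro w hw
    simp only [hC]
    rw [max_eq_right (by linarith : -w ≤ 0), max_eq_left hw]
    ring
  -- monotonicity pieces
  have leftInc : ∀ a b, τs ≤ a → a ≤ b → b ≤ 0 → tm ≤ a → C a ≤ C b := by
    intro a b ha hab hb htma
    rw [hCneg a (hab.trans hb), hCneg b hb]
    have hint : (b - a) • β m ≤ ∫ v in a..b, β (N₁ + v * s) := by
      rw [← intervalIntegral.integral_const]
      apply intervalIntegral.integral_mono_on hab
        (intervalIntegrable_const) (hβint a b ha (hab.trans hb) (ha.trans hab) hb)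
      intro v hv
      apply hβmono.monotoneOn hmm (hmemL v (ha.trans hv.1) (hv.2.trans hb))
      nlinarith [hmul (htma.trans hv.1), htms]
    have := hQleft a b ha hab hb
    simp only [smul_eq_mul] at hint
    linarith
  have leftDec : ∀ a b, τs ≤ a → a ≤ b → b ≤ 0 → b ≤ tm → C b ≤ C a := by
    intro a b ha hab hb htmb
    rw [hCneg a (hab.trans hb), hCneg b hb]
    have hint : (∫ v in a..b, β (N₁ + v * s)) ≤ (b - a) • β m := by
      rw [← intervalIntegral.integral_const]
      apply intervalIntegral.integral_mono_on hab
        (hβint a b ha (hab.trans hb) (ha.trans hab) hb) (intervalIntegrable_const)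
      intro v hv
      apply hβmono.monotoneOn (hmemL v (ha.trans hv.1) (hv.2.trans hb)) hmm
      nlinarith [hmul (hv.2.trans htmb), htms]
    have := hQleft a b ha hab hb
    simp only [smul_eq_mul] at hint
    linarith
  have rightInc : ∀ a b, 0 ≤ a → a ≤ b → b ≤ τe → tm ≤ a → C a ≤ C b := by
    intro a b ha hab hb htma
    rw [hCpos a ha, hCpos b (ha.trans hab)]
    have hint : (∫ v in a..b, γ (N₁ + v * s)) ≤ (b - a) • γ m := by
      rw [← intervalIntegral.integral_const]
      apply intervalIntegral.integral_mono_on hab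
        (hγint a b ha (hab.trans hb) (ha.trans hab) hb) (intervalIntegrable_const)
      intro v hv
      apply hγanti.antitoneOn hmm (hmemR v (ha.trans hv.1) (hv.2.trans hb))
      nlinarith [hmul (htma.trans hv.1), htms]
    have := hQright a b ha hab hb
    simp only [smul_eq_mul] at hint
    linarith
  have rightDec : ∀ a b, 0 ≤ a → a ≤ b → b ≤ τe → b ≤ tm → C b ≤ C a := by
    intro a b ha hab hb htmb
    rw [hCpos a ha, hCpos b (ha.trans hab)]
    have hint : (b - a) • γ m ≤ ∫ v in a..b, γ (N₁ + v * s) := by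
      rw [← intervalIntegral.integral_const]
      apply intervalIntegral.integral_mono_on hab
        (intervalIntegrable_const) (hγint a b ha (hab.trans hb) (ha.trans hab) hb)
      intro v hv
      apply hγanti.antitoneOn (hmemR v (ha.trans hv.1) (hv.2.trans hb)) hmm
      nlinarith [hmul (hv.2.trans htmb), htms]
    have := hQright a b ha hab hb
    simp only [smul_eq_mul] at hint
    linarith
  -- assembly
  show C tm ≤ C u
  rcases le_total u 0 with hu0 | hu0 <;> rcases le_total tm 0 with htm0 | htm0
  · -- both ≤ 0
    rcases le_total u tm with h | h
    · exact leftDec u tm hu1 h htm0 le_rfl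
    · exact leftInc tm u hτstm h hu0 le_rfl
  · -- u ≤ 0 ≤ tm
    calc C tm ≤ C 0 := rightDec 0 tm le_rfl htm0 htmτe le_rfl
    _ ≤ C u := leftDec u 0 hu1 hu0 le_rfl htm0
  · -- tm ≤ 0 ≤ u
    calc C tm ≤ C 0 := leftInc tm 0 hτstm htm0 le_rfl le_rfl
    _ ≤ C u := rightInc 0 u le_rfl hu0 hu2 htm0
  · -- both ≥ 0
    rcases le_total u tm with h | h
    · exact rightDec u tm hu0 h htmτe le_rfl
    · exact rightInc tm u htm0 h hu2 le_rfl
end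

section
/- With the equilibrium queueing profile Q defined by Q(t) = ∫_{τₛ}^{t} β(n(u)) du for t ≤ 0 and Q(t) = Q(0) − ∫₀^t γ(n(u)) du for t > 0, and any traveler m with t(m) < 0: the cost function C_m(u) is strictly decreasing in u on [τₛ, t(m)] and strictly increasing on [t(m), τₑ]. -/
open MeasureTheory Set

/-!
Before the peak (`u ≤ 0`) the cost is `C_m(u) = Q(u) - β(m) u` and `Q` accumulates `β(n(u))`,
so `C_m` changes at rate `β(n(u)) - β(m)`; since `β` is increasing and `n(t(m)) = m`, this rate
has the sign of `u - t(m)`. After the peak the cost is `Q(u) + γ(m) u` and `Q` loses `γ(n(u))`,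
so the rate is `γ(m) - γ(n(u)) > 0` because `n(u) > N₁ > m` and `γ` is decreasing. The rates
are only used in integrated form, comparing `∫ f` over `[u, v]` with `c (v - u)`.
-/

section IntegralIncrements

variable {F f : ℝ → ℝ} {a b c : ℝ}

theorem sub_eq_integral_of_eq_add_integral (hf : IntegrableOn f (Icc a b))
    (hF : ∀ t ∈ Ioc a b, F t = F a + ∫ x in a..t, f x) :
    ∀ u ∈ Icc a b, ∀ v ∈ Icc a b, F v - F u = ∫ x in u..v, f x := by
  have hF' : ∀ t ∈ Icc a b, F t = F a + ∫ x in a..t, f x := fun t ht => by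
    rcases ht.1.eq_or_lt with rfl | hat
    · simp
    · exact hF t ⟨hat, ht.2⟩
  intro u hu v hv
  have ha : a ∈ Icc a b := left_mem_Icc.2 (hu.1.trans hu.2)
  have hint : ∀ t ∈ Icc a b, IntervalIntegrable f volume a t := fun t ht =>
    (hf.mono_set (uIcc_subset_Icc ha ht)).intervalIntegrable
  rw [hF' u hu, hF' v hv, ← intervalIntegral.integral_interval_sub_left (hint v hv) (hint u hu)]
  ring

theorem strictMonoOn_sub_mul_of_lt {s : Set ℝ} (hab : Icc a b ⊆ s)
    (hf : IntegrableOn f s) (hF : ∀ u ∈ s, ∀ v ∈ s, F v - F u = ∫ x in u..v, f x)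
    (hlt : ∀ x ∈ Ioo a b, c < f x) :
    StrictMonoOn (fun t => F t - c * t) (Icc a b) := by
  intro u hu v hv huv
  have hfi : IntervalIntegrable f volume u v :=
    ((hf.mono_set hab).mono_set (uIcc_subset_Icc hu hv)).intervalIntegrable
  have hpos : 0 < ∫ x in u..v, (f x - c) :=
    intervalIntegral.intervalIntegral_pos_of_pos_on (hfi.sub intervalIntegrable_const)
      (fun x hx => sub_pos.2 (hlt x ⟨hu.1.trans_lt hx.1, hx.2.trans_le hv.2⟩)) huv
  rw [intervalIntegral.integral_sub hfi intervalIntegrable_const,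
    intervalIntegral.integral_const, smul_eq_mul] at hpos
  have hinc := hF u (hab hu) v (hab hv)
  show F u - c * u < F v - c * v
  linarith

theorem strictAntiOn_sub_mul_of_lt {s : Set ℝ} (hab : Icc a b ⊆ s)
    (hf : IntegrableOn f s) (hF : ∀ u ∈ s, ∀ v ∈ s, F v - F u = ∫ x in u..v, f x)
    (hlt : ∀ x ∈ Ioo a b, f x < c) :
    StrictAntiOn (fun t => F t - c * t) (Icc a b) := by
  have hneg := strictMonoOn_sub_mul_of_lt (F := -F) (f := -f) (c := -c) hab hf.neg
    (fun u hu v hv => by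
      simp only [Pi.neg_apply]
      rw [intervalIntegral.integral_neg, ← hF u hu v hv]
      ring)
    (fun x hx => neg_lt_neg (hlt x hx))
  intro u hu v hv huv
  have := hneg hu hv huv
  simp only [Pi.neg_apply] at this ⊢
  linarith

end IntegralIncrements

section Cost

/-- The paper's `C_m` is `cost Q (β m) (γ m)`: `p` and `q` are the early and late penalty
rates, and the peak is at time `0`. -/
def cost (Q : ℝ → ℝ) (p q u : ℝ) : ℝ := Q u + p * max (-u) 0 + q * max u 0

variable {Q f g : ℝ → ℝ} {p q a t₀ b : ℝ}

theorem cost_of_nonpos {u : ℝ} (hu : u ≤ 0) : cost Q p q u = Q u - p * u := by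
  rw [cost, max_eq_left (neg_nonneg.2 hu), max_eq_right hu]
  ring

theorem cost_of_nonneg {u : ℝ} (hu : 0 ≤ u) : cost Q p q u = Q u - -q * u := by
  rw [cost, max_eq_right (neg_nonpos.2 hu), max_eq_left hu]
  ring

theorem strictAntiOn_cost (ht₀ : t₀ ≤ 0) (hf : IntegrableOn f (Icc a 0))
    (hQf : ∀ u ∈ Icc a 0, ∀ v ∈ Icc a 0, Q v - Q u = ∫ x in u..v, f x)
    (hlt : ∀ x ∈ Ioo a t₀, f x < p) :
    StrictAntiOn (cost Q p q) (Icc a t₀) :=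
  (strictAntiOn_sub_mul_of_lt (Icc_subset_Icc_right ht₀) hf hQf hlt).congr
    fun _ hu => (cost_of_nonpos (hu.2.trans ht₀)).symm

theorem strictMonoOn_cost (ha : a ≤ t₀) (ht₀ : t₀ ≤ 0) (hb : 0 ≤ b)
    (hf : IntegrableOn f (Icc a 0))
    (hQf : ∀ u ∈ Icc a 0, ∀ v ∈ Icc a 0, Q v - Q u = ∫ x in u..v, f x)
    (hg : IntegrableOn g (Icc 0 b))
    (hQg : ∀ u ∈ Icc 0 b, ∀ v ∈ Icc 0 b, Q v - Q u = ∫ x in u..v, -g x)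
    (hgt : ∀ x ∈ Ioo t₀ 0, p < f x) (hlt : ∀ x ∈ Ioo 0 b, g x < q) :
    StrictMonoOn (cost Q p q) (Icc t₀ b) := by
  have before : StrictMonoOn (cost Q p q) (Icc t₀ 0) :=
    (strictMonoOn_sub_mul_of_lt (Icc_subset_Icc_left ha) hf hQf hgt).congr
      fun _ hu => (cost_of_nonpos hu.2).symm
  have after : StrictMonoOn (cost Q p q) (Icc 0 b) :=
    (strictMonoOn_sub_mul_of_lt subset_rfl hg.neg hQg fun x hx => neg_lt_neg (hlt x hx)).congr
      fun _ hu => (cost_of_nonneg hu.1).symm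
  rw [← Icc_union_Icc_eq_Icc ht₀ hb]
  exact before.union after (isGreatest_Icc ht₀) (isLeast_Icc hb)

end Cost

theorem cost_unimodal_early_traveler_general
    (N s N₁ : ℝ) (hs : 0 < s) (hN₁ : N₁ ∈ Set.Ioo (0:ℝ) N)
    (β γ : ℝ → ℝ)
    (hβc : ContinuousOn β (Set.Icc 0 N))
    (hβmono : StrictMonoOn β (Set.Icc 0 N))
    (hγc : ContinuousOn γ (Set.Icc 0 N))
    (hγanti : StrictAntiOn γ (Set.Icc 0 N))
    (Q : ℝ → ℝ)
    (hQ1 : ∀ t ∈ Set.Icc (-N₁ / s) 0, Q t = ∫ u in (-N₁ / s)..t, β (N₁ + u * s))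
    (hQ2 : ∀ t ∈ Set.Ioc (0:ℝ) ((N - N₁) / s),
      Q t = Q 0 - ∫ u in (0:ℝ)..t, γ (N₁ + u * s))
    (m : ℝ) (hm : m ∈ Set.Icc (0:ℝ) N) (htm : (m - N₁) / s < 0) :
    StrictAntiOn (fun u => Q u + β m * max (-u) 0 + γ m * max u 0)
      (Set.Icc (-N₁ / s) ((m - N₁) / s)) ∧
    StrictMonoOn (fun u => Q u + β m * max (-u) 0 + γ m * max u 0)
      (Set.Icc ((m - N₁) / s) ((N - N₁) / s)) := by
  set τs := -N₁ / s
  set tm := (m - N₁) / s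
  set τe := (N - N₁) / s
  set n : ℝ → ℝ := fun u => N₁ + u * s
  have hn : StrictMono n := (strictMono_mul_right_of_pos hs).const_add N₁
  have hn_div (k : ℝ) : n ((k - N₁) / s) = k := by simp only [n]; field_simp; ring
  have hn_τs : n τs = 0 := by simpa using hn_div 0
  have hn_tm : n tm = m := hn_div m
  have hn_τe : n τe = N := hn_div N
  have hn_maps : MapsTo n (Icc τs τe) (Icc 0 N) := fun x hx =>
    ⟨hn_τs ▸ hn.monotone hx.1, hn_τe ▸ hn.monotone hx.2⟩
  have hτs_tm : τs ≤ tm := hn.le_iff_le.1 (by rw [hn_τs, hn_tm]; exact hm.1)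
  have hτs : τs ≤ 0 := hτs_tm.trans htm.le
  have hτe : 0 < τe := div_pos (sub_pos.2 hN₁.2) hs
  have hn_cont : ContinuousOn n (Icc τs τe) := by fun_prop
  have hβint : IntegrableOn (β ∘ n) (Icc τs 0) :=
    ((hβc.comp hn_cont hn_maps).integrableOn_Icc).mono_set (Icc_subset_Icc_right hτe.le)
  have hγint : IntegrableOn (γ ∘ n) (Icc 0 τe) :=
    ((hγc.comp hn_cont hn_maps).integrableOn_Icc).mono_set (Icc_subset_Icc_left hτs)
  have hβn : StrictMonoOn (β ∘ n) (Icc τs 0) :=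
    (hβmono.comp (hn.strictMonoOn _) hn_maps).mono (Icc_subset_Icc_right hτe.le)
  have htm_mem : tm ∈ Icc τs 0 := ⟨hτs_tm, htm.le⟩
  have hQβ : ∀ u ∈ Icc τs 0, ∀ v ∈ Icc τs 0, Q v - Q u = ∫ x in u..v, (β ∘ n) x := by
    have hQτs : Q τs = 0 := by simpa using hQ1 τs ⟨le_rfl, hτs⟩
    refine sub_eq_integral_of_eq_add_integral hβint fun t ht => ?_
    rw [hQτs, zero_add]
    exact hQ1 t (Ioc_subset_Icc_self ht)
  have hQγ : ∀ u ∈ Icc 0 τe, ∀ v ∈ Icc 0 τe, Q v - Q u = ∫ x in u..v, -(γ ∘ n) x :=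
    sub_eq_integral_of_eq_add_integral hγint.neg fun t ht => by
      show Q t = Q 0 + ∫ x in (0 : ℝ)..t, -γ (n x)
      rw [intervalIntegral.integral_neg, ← sub_eq_add_neg]
      exact hQ2 t ht
  exact ⟨strictAntiOn_cost htm.le hβint hQβ fun x hx =>
      hn_tm ▸ hβn ⟨hx.1.le, hx.2.le.trans htm.le⟩ htm_mem hx.2,
    strictMonoOn_cost hτs_tm htm.le hτe.le hβint hQβ hγint hQγ
      (fun x hx => hn_tm ▸ hβn htm_mem ⟨hτs_tm.trans hx.1.le, hx.2.le⟩ hx.1)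
      fun x hx => hγanti hm (hn_maps ⟨hτs.trans hx.1.le, hx.2.le⟩)
        (hn_tm ▸ hn (htm.trans hx.1))⟩

/-- For a traveler m with t(m) < 0, the cost C_m is strictly decreasing
on [τₛ, t(m)] and strictly increasing on [t(m), τₑ] under the equilibrium profile. -/
theorem cost_unimodal_early_traveler
    (N s N₁ : ℝ) (hN : 0 < N) (hs : 0 < s) (hN₁ : N₁ ∈ Set.Ioo (0:ℝ) N)
    (β γ : ℝ → ℝ)
    (hβc : ContinuousOn β (Set.Icc 0 N))
    (hβmono : StrictMonoOn β (Set.Icc 0 N))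
    (hβmem : ∀ n ∈ Set.Icc (0:ℝ) N, β n ∈ Set.Ioo (0:ℝ) 1)
    (hγc : ContinuousOn γ (Set.Icc 0 N))
    (hγanti : StrictAntiOn γ (Set.Icc 0 N))
    (hγpos : ∀ n ∈ Set.Icc (0:ℝ) N, 0 < γ n)
    (hbal : (∫ n in (0:ℝ)..N₁, β n) = ∫ n in N₁..N, γ n)
    (Q : ℝ → ℝ)
    (hQ1 : ∀ t ∈ Set.Icc (-N₁ / s) 0, Q t = ∫ u in (-N₁ / s)..t, β (N₁ + u * s))
    (hQ2 : ∀ t ∈ Set.Ioc (0:ℝ) ((N - N₁) / s),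
      Q t = Q 0 - ∫ u in (0:ℝ)..t, γ (N₁ + u * s))
    (m : ℝ) (hm : m ∈ Set.Icc (0:ℝ) N) (htm : (m - N₁) / s < 0) :
    StrictAntiOn (fun u => Q u + β m * max (-u) 0 + γ m * max u 0)
      (Set.Icc (-N₁ / s) ((m - N₁) / s)) ∧
    StrictMonoOn (fun u => Q u + β m * max (-u) 0 + γ m * max u 0)
      (Set.Icc ((m - N₁) / s) ((N - N₁) / s)) :=
  cost_unimodal_early_traveler_general N s N₁ hs hN₁ β γ hβc hβmono hγc hγanti Q hQ1 hQ2 m hm htm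
end

section
/- Suppose Q is an equilibrium queueing profile with support (τₛ, τₑ), τₛ < τₑ. Then τₛ < 0 < τₑ; i.e., the support of Q contains the preferred arrival time 0. -/
/-- At equilibrium, the support (τₛ, τₑ) of the queueing profile
contains the preferred arrival time 0. -/
theorem support_contains_zero
    (N τs τe : ℝ) (hτ : τs < τe) (hN : 0 < N)
    (β γ Q nf : ℝ → ℝ)
    (hβmono : StrictMonoOn β (Set.Icc 0 N))
    (hβmem : ∀ n ∈ Set.Icc (0:ℝ) N, β n ∈ Set.Ioo (0:ℝ) 1)
    (hγanti : StrictAntiOn γ (Set.Icc 0 N))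
    (hγpos : ∀ n ∈ Set.Icc (0:ℝ) N, 0 < γ n)
    (hQc : Continuous Q)
    (hQsupp : ∀ t, t ∉ Set.Ioo τs τe → Q t = 0)
    (hQpos : ∀ t ∈ Set.Ioo τs τe, 0 < Q t)
    (hbij : Set.BijOn nf (Set.Icc τs τe) (Set.Icc 0 N))
    (heq : ∀ t ∈ Set.Icc τs τe, ∀ u : ℝ,
      Q t + β (nf t) * max (-t) 0 + γ (nf t) * max t 0 ≤
      Q u + β (nf t) * max (-u) 0 + γ (nf t) * max u 0) :
    τs < 0 ∧ 0 < τe := by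
  set t := (τs + τe) / 2 with ht
  have htmem : t ∈ Set.Ioo τs τe := ⟨by linarith, by linarith⟩
  have htIcc : t ∈ Set.Icc τs τe := ⟨le_of_lt htmem.1, le_of_lt htmem.2⟩
  have hn : nf t ∈ Set.Icc (0:ℝ) N := hbij.mapsTo htIcc
  have hQt : 0 < Q t := hQpos t htmem
  have hβt := hβmem _ hn
  have hγt := hγpos _ hn
  have hQs : Q τs = 0 := hQsupp τs (by simp [Set.mem_Ioo])
  have hQe : Q τe = 0 := hQsupp τe (by simp [Set.mem_Ioo])
  constructor
  · by_contra h
    push_neg at h  -- 0 ≤ τs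
    have h1 := heq t htIcc τs
    rw [hQs] at h1
    have htpos : 0 ≤ t := by linarith [htmem.1]
    rw [max_eq_right (by linarith : -t ≤ 0), max_eq_left htpos,
        max_eq_right (by linarith : -τs ≤ 0), max_eq_left h] at h1
    nlinarith [htmem.1]
  · by_contra h
    push_neg at h  -- τe ≤ 0
    have h1 := heq t htIcc τe
    rw [hQe] at h1
    have htneg : t ≤ 0 := by linarith [htmem.2]
    rw [max_eq_left (by linarith : 0 ≤ -t), max_eq_right htneg,
        max_eq_left (by linarith : 0 ≤ -τe), max_eq_right h] at h1
    nlinarith [mul_le_mul_of_nonneg_left (by linarith [htmem.2] : -τe ≤ -t) (le_of_lt hβt.1)]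
end

section
/- Suppose Q ≥ 0 is a continuous equilibrium queueing profile and there exist t₁ < t* < t₂ with Q(t₁) > 0, Q(t*) = 0, Q(t₂) > 0. Then the equilibrium condition is violated: some traveler can strictly reduce their cost by changing arrival time. Hence at equilibrium the support of Q is an interval. -/
/-- If the queue vanishes at t* between two times t₁ < t* < t₂ with
positive queues where travelers arrive at equilibrium, then the equilibrium
condition is violated (contradiction); hence the support of Q is an interval. -/
theorem support_is_interval
    (t₁ tstar t₂ m₁ m₂ : ℝ)
    (Q : ℝ → ℝ) (β γ : ℝ → ℝ)
    (h1 : t₁ < tstar) (h2 : tstar < t₂)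
    (hQnn : ∀ t, 0 ≤ Q t)
    (hQ1 : 0 < Q t₁) (hQs : Q tstar = 0) (hQ2 : 0 < Q t₂)
    (hβ1 : β m₁ ∈ Set.Ioo (0:ℝ) 1) (hβ2 : β m₂ ∈ Set.Ioo (0:ℝ) 1)
    (hγ1 : 0 < γ m₁) (hγ2 : 0 < γ m₂)
    (heq1 : ∀ u : ℝ, Q t₁ + β m₁ * max (-t₁) 0 + γ m₁ * max t₁ 0 ≤
      Q u + β m₁ * max (-u) 0 + γ m₁ * max u 0)
    (heq2 : ∀ u : ℝ, Q t₂ + β m₂ * max (-t₂) 0 + γ m₂ * max t₂ 0 ≤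
      Q u + β m₂ * max (-u) 0 + γ m₂ * max u 0) :
    False := by
  obtain ⟨hb1, hb1'⟩ := hβ1
  obtain ⟨hb2, hb2'⟩ := hβ2
  rcases le_or_gt 0 tstar with hts | hts
  · have h := heq2 tstar
    rw [hQs, max_eq_right (by linarith : -tstar ≤ 0),
      max_eq_left hts, max_eq_right (by linarith : -t₂ ≤ 0),
      max_eq_left (by linarith : (0:ℝ) ≤ t₂)] at h
    nlinarith
  · have h := heq1 tstar
    rw [hQs, max_eq_left (by linarith : 0 ≤ -tstar),
      max_eq_right hts.le, max_eq_left (by linarith : (0:ℝ) ≤ -t₁),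
      max_eq_right (by linarith : t₁ ≤ 0)] at h
    nlinarith
end

section
/- Let Q_A ∈ 𝒬 be a queueing profile with Q_A ≠ Q̂, let Y be an ordered local pressure-related mapping fixing the equilibrium Q̂, and let Q_B = Y(Q_A). Then d(Q_B, Q̂) ≥ d(Q_A, Q̂), where d is the sup-norm distance on the arrival interval. -/
/-- A function is piecewise continuously differentiable on [a,b] if [a,b] can be
partitioned into finitely many subintervals, on the interior of each of which the
function is differentiable with continuous derivative. -/
def PiecewiseC1On (f : ℝ → ℝ) (a b : ℝ) : Prop :=
  ∃ (k : ℕ) (p : ℕ → ℝ), 0 < k ∧ p 0 = a ∧ p k = b ∧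
    (∀ i < k, p i < p (i + 1)) ∧
    ∀ i < k, (∀ t ∈ Set.Ioo (p i) (p (i + 1)), DifferentiableAt ℝ f t) ∧
      ContinuousOn (deriv f) (Set.Ioo (p i) (p (i + 1)))

/-- The class 𝒬 of admissible queueing delay profiles on [τₛ, τₑ]. -/
def QSpace (τs τe : ℝ) : Set (ℝ → ℝ) :=
  {Q | ContinuousOn Q (Set.Icc τs τe) ∧ PiecewiseC1On Q τs τe ∧
    Q τs = 0 ∧ Q τe = 0 ∧ (∀ t ∈ Set.Ioo τs τe, 0 < Q t) ∧
    ∀ t₁ ∈ Set.Icc τs τe, ∀ t₂ ∈ Set.Icc τs τe, t₁ < t₂ → Q t₂ - Q t₁ < t₂ - t₁}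

/-- Sup-norm distance between two queueing profiles on [τₛ, τₑ]. -/
noncomputable def supDist (τs τe : ℝ) (Q₁ Q₂ : ℝ → ℝ) : ℝ :=
  sSup ((fun t => |Q₁ t - Q₂ t|) '' Set.Icc τs τe)

/-- Derivative of the cost profile of the traveler n(t) = N₁ + t·s arriving at t,
given queueing profile Q: C'_{n(t)}(t | Q). -/
noncomputable def costDeriv (β γ : ℝ → ℝ) (N₁ s : ℝ) (Q : ℝ → ℝ) (t : ℝ) : ℝ :=
  if t < 0 then deriv Q t - β (N₁ + t * s) else deriv Q t + γ (N₁ + t * s)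

/-- Ordered local pressure-related (OLP) dynamics: the mapping preserves 𝒬, and
wherever Q is differentiable the change in queue has the sign of the local cost
derivative. -/
def IsOLP (τs τe : ℝ) (β γ : ℝ → ℝ) (N₁ s : ℝ) (Y : (ℝ → ℝ) → (ℝ → ℝ)) : Prop :=
  (∀ Q ∈ QSpace τs τe, Y Q ∈ QSpace τs τe) ∧
  ∀ Q ∈ QSpace τs τe, ∀ t ∈ Set.Ioo τs τe, t ≠ 0 → DifferentiableAt ℝ Q t →
    0 ≤ (Y Q t - Q t) * costDeriv β γ N₁ s Q t

/-! Write `D = Q_A - Q̂` and `W = Y(Q_A) - Q̂`. Off finitely many points `D' = C'(· | Q_A)`, and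
the OLP condition says that `W - D = Y(Q_A) - Q_A` never has the sign opposite to `D'`.
Given `t*` with, say, `D t* ≥ 0`, let `c` be the last point of `[τₛ, t*]` with `D c ≤ W c`
(there is one, as `D τₛ = W τₛ = 0`). On `(c, t*]` we have `W < D`, hence `D' ≤ 0`, so
`D t* ≤ D c ≤ W c`. Every value of `|D|` is thus dominated by a value of `|W|`. -/

open Set

theorem image_le_of_hasDerivAt_nonpos_off_finite {u u' : ℝ → ℝ} {E : Set ℝ} (hE : E.Finite)
    {a b : ℝ} (hab : a ≤ b) (hu : ContinuousOn u (Icc a b))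
    (hu' : ∀ t ∈ Ioo a b \ E, HasDerivAt u (u' t) t) (hneg : ∀ t ∈ Ioo a b \ E, u' t ≤ 0) :
    u b ≤ u a := by
  induction E, hE using Set.Finite.induction_on generalizing a b with
  | empty =>
    simp only [sdiff_empty] at hu' hneg
    refine antitoneOn_of_hasDerivWithinAt_nonpos (convex_Icc a b) hu
      (fun t ht => (hu' t (by rwa [interior_Icc] at ht)).hasDerivWithinAt)
      (fun t ht => hneg t (by rwa [interior_Icc] at ht))
      (left_mem_Icc.2 hab) (right_mem_Icc.2 hab) hab
  | @insert c E _ _ ih =>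
    by_cases hc : c ∈ Ioo a b
    · have hac : u c ≤ u a := ih hc.1.le (hu.mono (Icc_subset_Icc_right hc.2.le))
        (fun t ht => hu' t ⟨⟨ht.1.1, ht.1.2.trans hc.2⟩, by simp [ht.2, ht.1.2.ne]⟩)
        (fun t ht => hneg t ⟨⟨ht.1.1, ht.1.2.trans hc.2⟩, by simp [ht.2, ht.1.2.ne]⟩)
      have hcb : u b ≤ u c := ih hc.2.le (hu.mono (Icc_subset_Icc_left hc.1.le))
        (fun t ht => hu' t ⟨⟨hc.1.trans ht.1.1, ht.1.2⟩, by simp [ht.2, ht.1.1.ne']⟩)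
        (fun t ht => hneg t ⟨⟨hc.1.trans ht.1.1, ht.1.2⟩, by simp [ht.2, ht.1.1.ne']⟩)
      exact hcb.trans hac
    · have hsub : Ioo a b \ E ⊆ Ioo a b \ insert c E := fun t ht =>
        ⟨ht.1, by rintro (rfl | htE); exacts [hc ht.1, ht.2 htE]⟩
      exact ih hab hu (fun t ht => hu' t (hsub ht)) (fun t ht => hneg t (hsub ht))

theorem exists_le_of_sub_mul_deriv_nonneg {u u' v : ℝ → ℝ} {E : Set ℝ} (hE : E.Finite)
    {a b : ℝ} (hab : a ≤ b) (hu : ContinuousOn u (Icc a b)) (hv : ContinuousOn v (Icc a b))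
    (ha : u a ≤ v a) (hu' : ∀ t ∈ Ioo a b \ E, HasDerivAt u (u' t) t)
    (hsign : ∀ t ∈ Ioo a b \ E, 0 ≤ (v t - u t) * u' t) :
    ∃ t ∈ Icc a b, u b ≤ v t := by
  obtain ⟨c, ⟨hcI, hcuv⟩, hcmax⟩ : ∃ c, IsGreatest {t ∈ Icc a b | u t ≤ v t} c :=
    (isCompact_Icc.of_isClosed_subset (isClosed_Icc.isClosed_le hu hv) (sep_subset _ _)
      ).exists_isGreatest ⟨a, ⟨left_mem_Icc.2 hab, ha⟩⟩
  have hvu : ∀ t ∈ Ioc c b, v t < u t := fun t ht =>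
    lt_of_not_ge fun h => ht.1.not_ge (hcmax ⟨⟨hcI.1.trans ht.1.le, ht.2⟩, h⟩)
  have hbc : u b ≤ u c := by
    refine image_le_of_hasDerivAt_nonpos_off_finite hE hcI.2
      (hu.mono (Icc_subset_Icc_left hcI.1)) (fun t ht => hu' t ⟨?_, ht.2⟩) fun t ht => ?_
    · exact ⟨hcI.1.trans_lt ht.1.1, ht.1.2⟩
    · exact nonpos_of_mul_nonneg_right (hsign t ⟨⟨hcI.1.trans_lt ht.1.1, ht.1.2⟩, ht.2⟩)
        (sub_neg.2 (hvu t ⟨ht.1.1, ht.1.2.le⟩))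
  exact ⟨c, hcI, hbc.trans hcuv⟩

theorem exists_abs_le_abs_of_sub_mul_deriv_nonneg {u u' v : ℝ → ℝ} {E : Set ℝ} (hE : E.Finite)
    {a b c : ℝ} (hc : c ∈ Icc a b) (hu : ContinuousOn u (Icc a b))
    (hv : ContinuousOn v (Icc a b)) (ha : u a = v a)
    (hu' : ∀ t ∈ Ioo a b \ E, HasDerivAt u (u' t) t)
    (hsign : ∀ t ∈ Ioo a b \ E, 0 ≤ (v t - u t) * u' t) :
    ∃ t ∈ Icc a b, |u c| ≤ |v t| := by
  have hsub : Icc a c ⊆ Icc a b := Icc_subset_Icc_right hc.2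
  have hsub' : Ioo a c \ E ⊆ Ioo a b \ E := sdiff_subset_sdiff_left (Ioo_subset_Ioo_right hc.2)
  rcases le_total 0 (u c) with hpos | hneg
  · obtain ⟨t, ht, hle⟩ := exists_le_of_sub_mul_deriv_nonneg hE hc.1 (hu.mono hsub)
      (hv.mono hsub) ha.le (fun t ht => hu' t (hsub' ht)) fun t ht => hsign t (hsub' ht)
    exact ⟨t, hsub ht, by rw [abs_of_nonneg hpos]; exact hle.trans (le_abs_self _)⟩
  · obtain ⟨t, ht, hle⟩ := exists_le_of_sub_mul_deriv_nonneg (u := -u) (u' := -u') (v := -v) hE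
      hc.1 (hu.mono hsub).neg (hv.mono hsub).neg (by simp [ha])
      (fun t ht => (hu' t (hsub' ht)).neg) fun t ht => by
        convert hsign t (hsub' ht) using 1; simp only [Pi.neg_apply]; ring
    exact ⟨t, hsub ht, by rw [abs_of_nonpos hneg]; exact hle.trans (neg_le_abs _)⟩

theorem exists_mem_Ioo_of_forall_ne {p : ℕ → ℝ} {t : ℝ} :
    ∀ {k : ℕ}, p 0 < t → t < p k → (∀ i ≤ k, p i ≠ t) → ∃ i < k, t ∈ Ioo (p i) (p (i + 1))
  | 0, h0, hk, _ => absurd (h0.trans hk) (lt_irrefl _)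
  | k + 1, h0, hk, hne => by
    rcases lt_or_ge t (p k) with htk | hkt
    · obtain ⟨i, hi, hti⟩ := exists_mem_Ioo_of_forall_ne h0 htk fun i hi => hne i (by omega)
      exact ⟨i, by omega, hti⟩
    · exact ⟨k, by omega, lt_of_le_of_ne hkt (hne k (by omega)), hk⟩

theorem PiecewiseC1On.exists_finite_differentiableAt {f : ℝ → ℝ} {a b : ℝ}
    (hf : PiecewiseC1On f a b) :
    ∃ E : Set ℝ, E.Finite ∧ ∀ t ∈ Ioo a b \ E, DifferentiableAt ℝ f t := by
  obtain ⟨k, p, -, rfl, rfl, -, hdiff⟩ := hf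
  refine ⟨p '' Iic k, (finite_Iic k).image p, fun t ⟨ht, htE⟩ => ?_⟩
  obtain ⟨i, hi, hti⟩ := exists_mem_Ioo_of_forall_ne ht.1 ht.2 fun i hi hit => htE ⟨i, hi, hit⟩
  exact (hdiff i hi).1 t hti

theorem hasDerivAt_sub_costDeriv {β γ : ℝ → ℝ} {N₁ s τs τe t : ℝ} {Q Qhat : ℝ → ℝ}
    (hQhat1 : ∀ t ∈ Ioo τs 0, HasDerivAt Qhat (β (N₁ + t * s)) t)
    (hQhat2 : ∀ t ∈ Ioo 0 τe, HasDerivAt Qhat (-γ (N₁ + t * s)) t)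
    (ht : t ∈ Ioo τs τe) (ht0 : t ≠ 0) (hQ : DifferentiableAt ℝ Q t) :
    HasDerivAt (fun t => Q t - Qhat t) (costDeriv β γ N₁ s Q t) t := by
  rcases ht0.lt_or_gt with hneg | hpos
  · rw [costDeriv, if_pos hneg]
    exact hQ.hasDerivAt.sub (hQhat1 t ⟨ht.1, hneg⟩)
  · rw [costDeriv, if_neg hpos.not_gt, ← sub_neg_eq_add]
    exact hQ.hasDerivAt.sub (hQhat2 t ⟨hpos, ht.2⟩)

theorem supDist_le_supDist_of_forall_exists_abs_le {a b : ℝ} {A B C : ℝ → ℝ} (hab : a ≤ b)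
    (hBC : ContinuousOn (fun t => B t - C t) (Icc a b))
    (h : ∀ t ∈ Icc a b, ∃ t' ∈ Icc a b, |A t - C t| ≤ |B t' - C t'|) :
    supDist a b A C ≤ supDist a b B C := by
  have hbdd : BddAbove ((fun t => |B t - C t|) '' Icc a b) :=
    (isCompact_Icc.image_of_continuousOn hBC.abs).bddAbove
  refine csSup_le ((nonempty_Icc.2 hab).image _) ?_
  rintro _ ⟨t, ht, rfl⟩
  obtain ⟨t', ht', hle⟩ := h t ht
  exact hle.trans (le_csSup hbdd ⟨t', ht', rfl⟩)

theorem olp_distance_nondecreasing_general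
    (N₁ s τs τe : ℝ)
    (hτs : τs < 0) (hτe : 0 < τe)
    (β γ : ℝ → ℝ)
    (Qhat : ℝ → ℝ) (hQhat : Qhat ∈ QSpace τs τe)
    (hQhat1 : ∀ t ∈ Set.Ioo τs 0, HasDerivAt Qhat (β (N₁ + t * s)) t)
    (hQhat2 : ∀ t ∈ Set.Ioo 0 τe, HasDerivAt Qhat (-γ (N₁ + t * s)) t)
    (Y : (ℝ → ℝ) → (ℝ → ℝ)) (hY : IsOLP τs τe β γ N₁ s Y)
    (QA : ℝ → ℝ) (hQA : QA ∈ QSpace τs τe) :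
    supDist τs τe QA Qhat ≤ supDist τs τe (Y QA) Qhat := by
  obtain ⟨hYc, -, hYs, -⟩ := hY.1 QA hQA
  have hOLP := hY.2 QA hQA
  obtain ⟨hQAc, hQApw, hQAs, -⟩ := hQA
  obtain ⟨hQhatc, -, hQhats, -⟩ := hQhat
  obtain ⟨E, hE, hdiff⟩ := hQApw.exists_finite_differentiableAt
  have hE0 : ∀ t ∈ Ioo τs τe \ insert 0 E, t ≠ 0 ∧ t ∈ Ioo τs τe \ E := fun t ⟨ht, htE⟩ =>
    ⟨fun h => htE (.inl h), ht, fun h => htE (.inr h)⟩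
  refine supDist_le_supDist_of_forall_exists_abs_le (by linarith) (hYc.sub hQhatc) fun c hc =>
    exists_abs_le_abs_of_sub_mul_deriv_nonneg (u := fun t => QA t - Qhat t)
      (u' := costDeriv β γ N₁ s QA) (v := fun t => Y QA t - Qhat t) (hE.insert 0) hc
      (hQAc.sub hQhatc) (hYc.sub hQhatc) (by rw [hQAs, hQhats, hYs]) (fun t ht => ?_) fun t ht => ?_
  · exact hasDerivAt_sub_costDeriv hQhat1 hQhat2 ht.1 (hE0 t ht).1 (hdiff t (hE0 t ht).2)
  · rw [sub_sub_sub_cancel_right]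
    exact hOLP t ht.1 (hE0 t ht).1 (hdiff t (hE0 t ht).2)

/-- For any OLP mapping Y fixing the equilibrium Q̂ and any
non-equilibrium profile Q_A ∈ 𝒬, the distance from equilibrium does not decrease:
d(Y(Q_A), Q̂) ≥ d(Q_A, Q̂). -/
theorem olp_distance_nondecreasing
    (N N₁ s τs τe : ℝ) (hs : 0 < s) (hN : 0 < N)
    (hτs : τs < 0) (hτe : 0 < τe) (hN₁ : N₁ = -s * τs) (hτeN : τe = τs + N / s)
    (β γ : ℝ → ℝ)
    (hβc : ContinuousOn β (Set.Icc 0 N))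
    (hβmono : StrictMonoOn β (Set.Icc 0 N))
    (hβmem : ∀ n ∈ Set.Icc (0:ℝ) N, β n ∈ Set.Ioo (0:ℝ) 1)
    (hγc : ContinuousOn γ (Set.Icc 0 N))
    (hγanti : StrictAntiOn γ (Set.Icc 0 N))
    (hγpos : ∀ n ∈ Set.Icc (0:ℝ) N, 0 < γ n)
    (Qhat : ℝ → ℝ) (hQhat : Qhat ∈ QSpace τs τe)
    (hQhat1 : ∀ t ∈ Set.Ioo τs 0, HasDerivAt Qhat (β (N₁ + t * s)) t)
    (hQhat2 : ∀ t ∈ Set.Ioo 0 τe, HasDerivAt Qhat (-γ (N₁ + t * s)) t)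
    (Y : (ℝ → ℝ) → (ℝ → ℝ)) (hY : IsOLP τs τe β γ N₁ s Y) (hfix : Y Qhat = Qhat)
    (QA : ℝ → ℝ) (hQA : QA ∈ QSpace τs τe)
    (hne : ∃ t ∈ Set.Icc τs τe, QA t ≠ Qhat t) :
    supDist τs τe QA Qhat ≤ supDist τs τe (Y QA) Qhat :=
  olp_distance_nondecreasing_general N₁ s τs τe hτs hτe β γ Qhat hQhat hQhat1 hQhat2 Y hY QA hQA
end

section
/- Suppose Q is an equilibrium queueing profile on a single interval (τₛ, τₑ), n(t) is the (strictly increasing, continuous) equilibrium assignment, and define the gap G(t) = Q(t) − ∫_{τₛ}^{t} β(n(u)) du for t ∈ [τₛ, 0]. Then G ≡ 0 on [τₛ, 0]. -/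
/-!
Write `c = β ∘ n` for the price, which is nondecreasing. Comparing the equilibrium inequalities at
`t` and `u` traps the increment `Q t - Q u` between `c u * (t - u)` and `c t * (t - u)`, and
monotonicity traps `∫ u..t, c` between the same two numbers. Hence the gap `G` satisfies
`|G t - G u| ≤ (c t - c u) * (t - u)`. Cutting `[τₛ, t]` into `n` equal pieces and summing, the
increments of `c` telescope, so `|G t - G τₛ| ≤ (c t - c τₛ) * (t - τₛ) / n` for every `n`; hence
`G t = G τₛ = 0`.
-/

open MeasureTheory intervalIntegral Set Filter

section Telescoping

variable {f g : ℝ → ℝ} {a b : ℝ}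

theorem abs_sub_le_div_of_abs_sub_le_mul_sub (hab : a ≤ b)
    (hg : ∀ u ∈ Icc a b, ∀ t ∈ Icc a b, u ≤ t → |g t - g u| ≤ (f t - f u) * (t - u))
    {n : ℕ} (hn : 0 < n) :
    |g b - g a| ≤ (f b - f a) * (b - a) / n := by
  set δ := (b - a) / n with hδ
  have hδ_nonneg : 0 ≤ δ := div_nonneg (sub_nonneg.2 hab) n.cast_nonneg
  have hnδ : a + n * δ = b := by
    rw [hδ]; field_simp; ring
  have hmem : ∀ k ≤ n, a + k * δ ∈ Icc a b := fun k hk =>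
    ⟨le_add_of_nonneg_right (by positivity),
      hnδ ▸ add_le_add_right (mul_le_mul_of_nonneg_right (Nat.cast_le.2 hk) hδ_nonneg) a⟩
  have key : ∀ k ≤ n, |g (a + k * δ) - g a| ≤ (f (a + k * δ) - f a) * δ := by
    intro k
    induction k with
    | zero => simp
    | succ k ih =>
      intro hk
      have step := hg _ (hmem k (by omega)) _ (hmem (k + 1) hk) (by push_cast; linarith)
      rw [show a + (k + 1 : ℕ) * δ - (a + k * δ) = δ by push_cast; ring] at step
      calc |g (a + (k + 1 : ℕ) * δ) - g a|
          ≤ |g (a + (k + 1 : ℕ) * δ) - g (a + k * δ)| + |g (a + k * δ) - g a| := abs_sub_le _ _ _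
        _ ≤ (f (a + (k + 1 : ℕ) * δ) - f (a + k * δ)) * δ + (f (a + k * δ) - f a) * δ :=
          add_le_add step (ih (by omega))
        _ = (f (a + (k + 1 : ℕ) * δ) - f a) * δ := by ring
  simpa only [hnδ, mul_div_assoc] using key n le_rfl

theorem eq_of_abs_sub_le_mul_sub
    (hg : ∀ u ∈ Icc a b, ∀ t ∈ Icc a b, u ≤ t → |g t - g u| ≤ (f t - f u) * (t - u)) :
    ∀ t ∈ Icc a b, g t = g a := by
  intro t ht
  have hsub : Icc a t ⊆ Icc a b := Icc_subset_Icc_right ht.2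
  have hbound : ∀ n : ℕ, 0 < n → |g t - g a| ≤ (f t - f a) * (t - a) / n := fun n hn =>
    abs_sub_le_div_of_abs_sub_le_mul_sub ht.1
      (fun u hu s hs => hg u (hsub hu) s (hsub hs)) hn
  have hle : |g t - g a| ≤ 0 :=
    ge_of_tendsto (tendsto_const_div_atTop_nhds_zero_nat _)
      ((eventually_gt_atTop 0).mono hbound)
  exact sub_eq_zero.1 (abs_nonpos_iff.1 hle)

end Telescoping

theorem MonotoneOn.mul_sub_le_integral {f : ℝ → ℝ} {u t : ℝ} (hf : MonotoneOn f (Icc u t))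
    (hut : u ≤ t) : f u * (t - u) ≤ ∫ x in u..t, f x := by
  have hint : IntervalIntegrable f volume u t := (uIcc_of_le hut ▸ hf).intervalIntegrable
  have h := integral_mono_on hut intervalIntegrable_const hint
    fun x hx => hf (left_mem_Icc.2 hut) hx hx.1
  simpa [mul_comm] using h

theorem MonotoneOn.integral_le_mul_sub {f : ℝ → ℝ} {u t : ℝ} (hf : MonotoneOn f (Icc u t))
    (hut : u ≤ t) : ∫ x in u..t, f x ≤ f t * (t - u) := by
  have hint : IntervalIntegrable f volume u t := (uIcc_of_le hut ▸ hf).intervalIntegrable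
  have h := integral_mono_on hut hint intervalIntegrable_const
    fun x hx => hf hx (right_mem_Icc.2 hut) hx.2
  simpa [mul_comm] using h

/-- Every `t ∈ s` minimizes over `s` the cost `u ↦ Q u - c t * u` at its own price `c t`. -/
def IsEquilibrium (s : Set ℝ) (c Q : ℝ → ℝ) : Prop :=
  ∀ t ∈ s, ∀ u ∈ s, Q t + c t * (-t) ≤ Q u + c t * (-u)

noncomputable def gap (a : ℝ) (c Q : ℝ → ℝ) (t : ℝ) : ℝ :=
  Q t - ∫ x in a..t, c x

namespace IsEquilibrium

variable {s : Set ℝ} {c Q : ℝ → ℝ}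

theorem mul_sub_le_sub (hQ : IsEquilibrium s c Q) {u t : ℝ} (hu : u ∈ s) (ht : t ∈ s) :
    c u * (t - u) ≤ Q t - Q u := by
  linear_combination hQ u hu t ht

theorem sub_le_mul_sub (hQ : IsEquilibrium s c Q) {u t : ℝ} (hu : u ∈ s) (ht : t ∈ s) :
    Q t - Q u ≤ c t * (t - u) := by
  linear_combination hQ t ht u hu

theorem abs_gap_sub_le {a b : ℝ} (hQ : IsEquilibrium (Icc a b) c Q)
    (hc : MonotoneOn c (Icc a b)) :
    ∀ u ∈ Icc a b, ∀ t ∈ Icc a b, u ≤ t →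
      |gap a c Q t - gap a c Q u| ≤ (c t - c u) * (t - u) := by
  intro u hu t ht hut
  have hc_int : ∀ v ∈ Icc a b, IntervalIntegrable c volume a v := fun v hv =>
    (hc.mono (uIcc_subset_Icc (left_mem_Icc.2 (hu.1.trans hu.2)) hv)).intervalIntegrable
  have hcut : MonotoneOn c (Icc u t) := hc.mono (Icc_subset_Icc hu.1 ht.2)
  have hsplit : gap a c Q t - gap a c Q u = (Q t - Q u) - ∫ x in u..t, c x := by
    rw [gap, gap, ← integral_interval_sub_left (hc_int t ht) (hc_int u hu)]
    ring
  rw [hsplit, ← Real.dist_eq, sub_mul]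
  exact Real.dist_le_of_mem_Icc ⟨hQ.mul_sub_le_sub hu ht, hQ.sub_le_mul_sub hu ht⟩
    ⟨hcut.mul_sub_le_integral hut, hcut.integral_le_mul_sub hut⟩

end IsEquilibrium

theorem gap_function_zero_general
    (N τs : ℝ)
    (β nf Q : ℝ → ℝ)
    (hβmono : StrictMonoOn β (Set.Icc 0 N))
    (hnfmono : StrictMonoOn nf (Set.Icc τs 0))
    (hnfmap : Set.MapsTo nf (Set.Icc τs 0) (Set.Icc 0 N))
    (hQτs : Q τs = 0)
    (heq : ∀ t ∈ Set.Icc τs 0, ∀ u ∈ Set.Icc τs 0,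
      Q t + β (nf t) * (-t) ≤ Q u + β (nf t) * (-u)) :
    ∀ t ∈ Set.Icc τs 0, Q t - (∫ u in τs..t, β (nf u)) = 0 := by
  have hprice : MonotoneOn (fun t => β (nf t)) (Icc τs 0) := fun u hu t ht hut =>
    hβmono.monotoneOn (hnfmap hu) (hnfmap ht) (hnfmono.monotoneOn hu ht hut)
  have hQ : IsEquilibrium (Icc τs 0) (fun t => β (nf t)) Q := heq
  intro t ht
  have hconst := eq_of_abs_sub_le_mul_sub (hQ.abs_gap_sub_le hprice) t ht
  simpa only [gap, integral_same, sub_zero, hQτs] using hconst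

/-- At equilibrium, the gap function
G(t) = Q(t) − ∫_{τₛ}^t β(n(u)) du vanishes identically on [τₛ, 0]. -/
theorem gap_function_zero
    (N τs : ℝ) (hτs : τs < 0) (hN : 0 < N)
    (β nf Q : ℝ → ℝ)
    (hβc : ContinuousOn β (Set.Icc 0 N))
    (hβmono : StrictMonoOn β (Set.Icc 0 N))
    (hβmem : ∀ n ∈ Set.Icc (0:ℝ) N, β n ∈ Set.Ioo (0:ℝ) 1)
    (hnfc : ContinuousOn nf (Set.Icc τs 0))
    (hnfmono : StrictMonoOn nf (Set.Icc τs 0))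
    (hnfmap : Set.MapsTo nf (Set.Icc τs 0) (Set.Icc 0 N))
    (hQc : ContinuousOn Q (Set.Icc τs 0))
    (hQτs : Q τs = 0)
    (heq : ∀ t ∈ Set.Icc τs 0, ∀ u ∈ Set.Icc τs 0,
      Q t + β (nf t) * (-t) ≤ Q u + β (nf t) * (-u)) :
    ∀ t ∈ Set.Icc τs 0, Q t - (∫ u in τs..t, β (nf u)) = 0 :=
  gap_function_zero_general N τs β nf Q hβmono hnfmono hnfmap hQτs heq
end

section
/- Suppose travelers must all arrive within an interval [τₛ, τₑ] of width strictly less than N/s at equilibrium (bottleneck capacity s, N travelers), so that some traveler arrives outside (τₛ, τₑ) where Q = 0. Then that traveler can strictly reduce their cost by arriving at τₛ (if they arrive earlier) or τₑ (if later), contradicting equilibrium. Hence the equilibrium arrival interval has width exactly N/s. -/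
/-- A traveler arriving outside the queueing interval [τₛ, τₑ]
(where Q = 0) can strictly reduce their cost by arriving at τₛ (if earlier) or at
τₑ (if later); hence at equilibrium the arrival interval has width exactly N/s. -/
theorem outside_arrival_improvement
    (τs τe : ℝ) (hτs : τs < 0) (hτe : 0 < τe)
    (Q : ℝ → ℝ) (hQnn : ∀ t, 0 ≤ Q t)
    (hQsupp : ∀ t, t ∉ Set.Ioo τs τe → Q t = 0)
    (βm γm : ℝ) (hβ : βm ∈ Set.Ioo (0:ℝ) 1) (hγ : 0 < γm) :
    (∀ t, t < τs →
      Q τs + βm * max (-τs) 0 + γm * max τs 0 <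
      Q t + βm * max (-t) 0 + γm * max t 0) ∧
    (∀ t, τe < t →
      Q τe + βm * max (-τe) 0 + γm * max τe 0 <
      Q t + βm * max (-t) 0 + γm * max t 0) := by
  obtain ⟨hβ0, hβ1⟩ := hβ
  have hQs : Q τs = 0 := hQsupp τs (by simp [Set.mem_Ioo])
  have hQe : Q τe = 0 := hQsupp τe (by simp [Set.mem_Ioo])
  constructor
  · intro t ht
    have htn : t < 0 := ht.trans hτs
    have h1 : max (-τs) 0 = -τs := max_eq_left (by linarith)
    have h2 : max τs 0 = 0 := max_eq_right hτs.le
    have h3 : max (-t) 0 = -t := max_eq_left (by linarith)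
    have h4 : max t 0 = 0 := max_eq_right htn.le
    have := hQnn t
    rw [hQs, h1, h2, h3, h4]
    nlinarith
  · intro t ht
    have htp : 0 < t := hτe.trans ht
    have h1 : max (-τe) 0 = 0 := max_eq_right (by linarith)
    have h2 : max τe 0 = τe := max_eq_left hτe.le
    have h3 : max (-t) 0 = 0 := max_eq_right (by linarith)
    have h4 : max t 0 = t := max_eq_left htp.le
    have := hQnn t
    rw [hQe, h1, h2, h3, h4]
    nlinarith
end
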